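/- Let (s_k)_{k≥1} be i.i.d. integrable real-valued random variables with s_k ≤ 1 almost surely and μ = E[s_1] > 0, and let h > 0. Then the one-sided CUSUM alarm time satisfies E[T_h] ≤ (h + 1)/μ. -/

import Mathlib

open MeasureTheory ProbabilityTheory
open scoped ENNReal

/-- One-sided CUSUM statistic with step sequence `x` (where `x k` is the `(k+1)`-st
step `s_{k+1}`): `g_0 = 0`, `g_{k+1} = max (0, g_k + s_{k+1})`. -/
def gCusum (x : ℕ → ℝ) : ℕ → ℝ
  | 0 => 0
  | k + 1 => max 0 (gCusum x k + x k)

/-- One-sided CUSUM alarm time `T_h = inf {k ≥ 1 : g_k ≥ h}`, valued in `ℝ≥0∞`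
(`⊤` if the threshold is never reached). -/
noncomputable def oneSidedAlarm (h : ℝ) (x : ℕ → ℝ) : ℝ≥0∞ :=
  sInf ((fun n : ℕ => (n : ℝ≥0∞)) '' {k : ℕ | 1 ≤ k ∧ h ≤ gCusum x k})

/-!
The CUSUM statistic dominates the random walk `S_k = s_1 + ⋯ + s_k`, so `T_h` is at most the
first passage time `τ` of the walk over `h`, and `E[τ] = ∑_k P(τ > k)`. The event `{τ > k}` is
determined by `s_1, …, s_k`, hence independent of `s_{k+1}`, so (Wald)
`m ∑_{k<N} P(τ > k) = ∑_{k<N} E[s_{k+1}; τ > k] = E[S_{min(τ, N)}] ≤ h + 1`: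
the walk is below `h` just before `τ` and a single step adds at most `1`.
-/

theorem sum_range_le_gCusum (x : ℕ → ℝ) (k : ℕ) : ∑ i ∈ Finset.range k, x i ≤ gCusum x k := by
  induction k with
  | zero => simp [gCusum]
  | succ k ih =>
    rw [Finset.sum_range_succ, gCusum]
    exact le_max_of_le_right (by linarith)

theorem oneSidedAlarm_le_of_le_sum {h : ℝ} {x : ℕ → ℝ} {n : ℕ} (hn : 1 ≤ n)
    (hhit : h ≤ ∑ i ∈ Finset.range n, x i) : oneSidedAlarm h x ≤ n :=
  sInf_le ⟨n, ⟨hn, hhit.trans (sum_range_le_gCusum x n)⟩, rfl⟩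

/-- The event `τ > k`, for `τ` the first `j ≥ 1` with `h ≤ ∑ i < j, x i`. -/
def StaysBelow (h : ℝ) (x : ℕ → ℝ) (k : ℕ) : Prop :=
  ∀ j < k, ∑ i ∈ Finset.range (j + 1), x i < h

noncomputable instance (h : ℝ) (x : ℕ → ℝ) (k : ℕ) : Decidable (StaysBelow h x k) :=
  inferInstanceAs (Decidable (∀ j < k, _))

section StaysBelow

variable {h : ℝ} {x : ℕ → ℝ}

theorem antitone_staysBelow : Antitone (StaysBelow h x) :=
  fun _ _ hjk hk j hj => hk j (hj.trans_le hjk)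

theorem StaysBelow.sum_range_le (hh : 0 ≤ h) {k : ℕ} (hk : StaysBelow h x k) :
    ∑ i ∈ Finset.range k, x i ≤ h := by
  cases k with
  | zero => simpa using hh
  | succ k => exact (hk k k.lt_succ_self).le

theorem oneSidedAlarm_le_tsum_staysBelow :
    oneSidedAlarm h x ≤ ∑' k, if StaysBelow h x k then 1 else 0 := by
  by_cases hstay : ∀ k, StaysBelow h x k
  · simp [hstay]
  push Not at hstay
  let n := Nat.find hstay
  have hn : ¬StaysBelow h x n := Nat.find_spec hstay
  unfold StaysBelow at hn
  push Not at hn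
  obtain ⟨j, hjn, hhit⟩ := hn
  have hstay_lt : ∀ k < n, StaysBelow h x k := fun k hk => not_not.1 (Nat.find_min hstay hk)
  calc oneSidedAlarm h x ≤ (j + 1 : ℕ) := oneSidedAlarm_le_of_le_sum j.succ_pos hhit
    _ ≤ n := by exact_mod_cast hjn
    _ = ∑ k ∈ Finset.range n, if StaysBelow h x k then 1 else 0 := by
      rw [Finset.sum_congr rfl fun k hk => if_pos (hstay_lt k (Finset.mem_range.1 hk))]
      simp
    _ ≤ _ := ENNReal.sum_le_tsum _

theorem sum_ite_staysBelow_eq {N : ℕ} (hN : StaysBelow h x N) :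
    ∑ k ∈ Finset.range N, (if StaysBelow h x k then x k else 0) = ∑ k ∈ Finset.range N, x k :=
  Finset.sum_congr rfl fun _ hk =>
    if_pos (antitone_staysBelow (Finset.mem_range.1 hk).le hN)

theorem sum_ite_staysBelow_le (hh : 0 ≤ h) (hx : ∀ k, x k ≤ 1) (N : ℕ) :
    ∑ k ∈ Finset.range N, (if StaysBelow h x k then x k else 0) ≤ h + 1 := by
  induction N with
  | zero => simp only [Finset.range_zero, Finset.sum_empty]; linarith
  | succ N ih =>
    rw [Finset.sum_range_succ]
    by_cases hN : StaysBelow h x N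
    · rw [if_pos hN, sum_ite_staysBelow_eq hN]
      linarith [hN.sum_range_le hh, hx N]
    · simpa [hN] using ih

end StaysBelow

section Probability

variable {Ω : Type*} {mΩ : MeasurableSpace Ω} {μ : Measure Ω}

theorem measurableSet_staysBelow {m : MeasurableSpace Ω} {s : ℕ → Ω → ℝ} (h : ℝ) {k : ℕ}
    (hs : ∀ i < k, Measurable[m] (s i)) :
    MeasurableSet[m] {ω | StaysBelow h (fun i => s i ω) k} := by
  simp only [StaysBelow, Set.ofPred_forall]
  refine MeasurableSet.iInter fun j => MeasurableSet.iInter fun hj => ?_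
  refine measurableSet_lt (Finset.measurable_sum _ fun i hi => hs i ?_) measurable_const
  exact (Finset.mem_range.1 hi).trans_le hj

theorem setIntegral_staysBelow_eq_mul {s : ℕ → Ω → ℝ} (hmeas : ∀ k, Measurable (s k))
    (hindep : iIndepFun s μ) (h : ℝ) (k : ℕ) :
    ∫ ω in {ω | StaysBelow h (fun i => s i ω) k}, s k ω ∂μ
      = μ.real {ω | StaysBelow h (fun i => s i ω) k} * ∫ ω, s k ω ∂μ := by
  let past : MeasurableSpace Ω := ⨆ i < k, MeasurableSpace.comap (s i) inferInstance
  have hpast : past ≤ mΩ := iSup₂_le fun i _ => (hmeas i).comap_le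
  have hindep_past : Indep past (MeasurableSpace.comap (s k) inferInstance) μ := by
    simpa using indep_iSup_of_disjoint (fun i => (hmeas i).comap_le) hindep
      (S := Set.Iio k) (T := {k}) (by simp)
  refine hindep_past.setIntegral_eq_mul (f := id) hpast (hmeas k).aemeasurable
    (measurableSet_staysBelow h fun i hi => ?_) aestronglyMeasurable_id
  exact (comap_measurable (s i)).mono (le_iSup₂ (f := fun i (_ : i < k) =>
    MeasurableSpace.comap (s i) inferInstance) i hi) le_rfl

theorem sum_measureReal_staysBelow_le {s : ℕ → Ω → ℝ}
    (hmeas : ∀ k, Measurable (s k)) (hindep : iIndepFun s μ) (hint : ∀ k, Integrable (s k) μ)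
    (hbdd : ∀ᵐ ω ∂μ, ∀ k, s k ω ≤ 1) {m : ℝ} (hmean : ∀ k, ∫ ω, s k ω ∂μ = m) (hm : 0 < m)
    {h : ℝ} (hh : 0 ≤ h) (N : ℕ) :
    ∑ k ∈ Finset.range N, μ.real {ω | StaysBelow h (fun i => s i ω) k} ≤ (h + 1) / m := by
  set A : ℕ → Set Ω := fun k => {ω | StaysBelow h (fun i => s i ω) k}
  have hA : ∀ k, MeasurableSet (A k) := fun k => measurableSet_staysBelow h fun i _ => hmeas i
  have := hindep.isProbabilityMeasure
  rw [le_div_iff₀' hm]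
  calc m * ∑ k ∈ Finset.range N, μ.real (A k)
      = ∑ k ∈ Finset.range N, ∫ ω in A k, s k ω ∂μ := by
        rw [Finset.mul_sum]
        refine Finset.sum_congr rfl fun k _ => ?_
        rw [setIntegral_staysBelow_eq_mul hmeas hindep, hmean, mul_comm]
    _ = ∫ ω, ∑ k ∈ Finset.range N, (A k).indicator (s k) ω ∂μ := by
        rw [integral_finsetSum _ fun k _ => (hint k).indicator (hA k)]
        exact Finset.sum_congr rfl fun k _ => (integral_indicator (hA k)).symm
    _ ≤ ∫ _, h + 1 ∂μ := by
        refine integral_mono_ae (integrable_finsetSum _ fun k _ => (hint k).indicator (hA k))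
          (integrable_const _) ?_
        filter_upwards [hbdd] with ω hω
        simpa only [A, Set.indicator_apply, Set.mem_ofPred_eq] using sum_ite_staysBelow_le hh hω N
    _ = h + 1 := by simp

end Probability

/-- **One-sided detection-delay bound** (from the proof of Proposition 1).  If the
i.i.d. integrable steps satisfy `s_k ≤ 1` a.s. and have mean `m = E[s_1] > 0`, then
the one-sided CUSUM alarm time satisfies `E[T_h] ≤ (h + 1) / m`. -/
theorem one_sided_cusum_delay_bound
    {Ω : Type*} [MeasurableSpace Ω] {μ : Measure Ω} [IsProbabilityMeasure μ]
    (s : ℕ → Ω → ℝ) (hmeas : ∀ k, Measurable (s k))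
    (hindep : iIndepFun s μ)
    (hident : ∀ k, IdentDistrib (s k) (s 0) μ μ)
    (hint : Integrable (s 0) μ)
    (hbdd : ∀ k, ∀ᵐ ω ∂μ, s k ω ≤ 1)
    (m : ℝ) (hmean : ∫ ω, s 0 ω ∂μ = m) (hm : 0 < m)
    (h : ℝ) (hh : 0 < h) :
    ∫⁻ ω, oneSidedAlarm h (fun k => s k ω) ∂μ ≤ ENNReal.ofReal ((h + 1) / m) := by
  set A : ℕ → Set Ω := fun k => {ω | StaysBelow h (fun i => s i ω) k}
  have hA : ∀ k, MeasurableSet (A k) := fun k => measurableSet_staysBelow h fun i _ => hmeas i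
  have hsum := sum_measureReal_staysBelow_le hmeas hindep
    (fun k => (hident k).integrable_iff.2 hint) (ae_all_iff.2 hbdd)
    (fun k => (hident k).integral_eq.trans hmean) hm hh.le
  calc ∫⁻ ω, oneSidedAlarm h (fun k => s k ω) ∂μ
      ≤ ∫⁻ ω, ∑' k, (A k).indicator 1 ω ∂μ :=
        lintegral_mono fun ω => by
          simpa only [A, Set.indicator_apply, Set.mem_ofPred_eq, Pi.one_apply]
            using oneSidedAlarm_le_tsum_staysBelow
    _ = ∑' k, μ (A k) := by
        rw [lintegral_tsum fun k => (measurable_one.indicator (hA k)).aemeasurable]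
        simp only [lintegral_indicator_one (hA _)]
    _ ≤ ENNReal.ofReal ((h + 1) / m) := by
        refine ENNReal.tsum_le_of_sum_range_le fun N => ?_
        rw [← ENNReal.ofReal_toReal (ENNReal.sum_ne_top.2 fun k _ => measure_ne_top μ (A k)),
          ENNReal.toReal_sum fun k _ => measure_ne_top μ (A k)]
        exact ENNReal.ofReal_le_ofReal (hsum N)
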